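/- Let K be an algebraically closed field and f ∈ K[x_1,…,x_n] nonzero. Assume f is Newton non-degenerate: for every ω ∈ (ℝ_{≥0})^n and every z ∈ (K^*)^n with (In_ω f)(z) = 0, there exists j ∈ {1,…,n} with (∂(In_ω f)/∂x_j)(z) ≠ 0. Let M be an n×n unimodular matrix with nonnegative integer entries such that In_u f is the same polynomial for all u = Mλ with λ ∈ (ℝ_{>0})^n (the cone generated by the columns of M is good for f), and write f∘φ_{M^t} = x^P·h with P ∈ ℕ^n and h(0) ≠ 0. Then for every s ∈ {1,…,n} and every point y = (0,…,0,y_{s+1},…,y_n) ∈ K^n with y_i ≠ 0 for i > s and h(y) = 0, there exists j ∈ {s+1,…,n} with (∂h/∂x_j)(y) ≠ 0; i.e. the strict transform of the hypersurface V(f) in the chart associated to M is nonsingular at y and transversal to the coordinate subspace {x_1 = ⋯ = x_s = 0}. -/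

import Mathlib

/-!
Let `λ` be the indicator vector of the first `s` coordinates and `ω = Mλ`. The substitution
`φ_{Mᵀ}` maps `ω`-weights to `λ`-weights and multiplication by `x^P` shifts all `λ`-weights
equally, so `φ_{Mᵀ}(In_ω f) = x^P · In_λ h`. Since `h(0) ≠ 0`, `In_λ h` is `h` with
`x_1, …, x_s` set to zero. Replacing the zero coordinates of `y` by `1` gives a torus point `x`
with `(In_λ h)(x) = h(y) = 0`, so `In_ω f` vanishes at the torus point `z = monomialMap Mᵀ x`
and non-degeneracy yields `∂_k In_ω f(z) ≠ 0` for some `k`. The Euler-type identity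
`x_j ∂_j (g ∘ φ_N) = ∑_k N_jk (x_k ∂_k g) ∘ φ_N` and the invertibility of `Mᵀ` turn this into
`∂_j (x^P In_λ h)(x) ≠ 0`, i.e. `∂_j In_λ h(x) ≠ 0`, for some `j`. As `In_λ h` does not involve
`x_1, …, x_s`, this forces `j > s`, and then `∂_j In_λ h(x) = ∂_j h(y)`.
-/

open MvPolynomial Matrix

open Classical in
/-- The `w`-initial part of a multivariate polynomial: the sum of the terms whose
exponents have minimal `w`-weight among the exponents of `f`. -/
noncomputable def initialPart {n : ℕ} {K : Type*} [CommSemiring K] (w : Fin n → ℝ)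
    (f : MvPolynomial (Fin n) K) : MvPolynomial (Fin n) K :=
  ∑ μ ∈ f.support,
    if ∀ ν ∈ f.support, ∑ i, w i * (μ i : ℝ) ≤ ∑ i, w i * (ν i : ℝ)
    then monomial μ (f.coeff μ) else 0

/-- The monomial substitution `φ_M` on polynomials: `x_i ↦ ∏_j x_j ^ (M j i)`,
so that `x^μ ↦ x^(Mμ)`. -/
noncomputable def monomialSubst {n : ℕ} {K : Type*} [CommSemiring K]
    (M : Matrix (Fin n) (Fin n) ℕ) (f : MvPolynomial (Fin n) K) : MvPolynomial (Fin n) K :=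
  aeval (fun i => ∏ j, (X j : MvPolynomial (Fin n) K) ^ M j i) f

/-- A nonnegative integer square matrix is unimodular if its determinant (over `ℤ`) is `±1`. -/
def IsUnimodular {n : ℕ} (M : Matrix (Fin n) (Fin n) ℕ) : Prop :=
  (M.map fun a => (a : ℤ)).det = 1 ∨ (M.map fun a => (a : ℤ)).det = -1

section

variable {n : ℕ}

namespace IsUnimodular

variable {M : Matrix (Fin n) (Fin n) ℕ}

theorem transpose (hM : IsUnimodular M) : IsUnimodular Mᵀ := by
  rwa [IsUnimodular, transpose_map, det_transpose]

theorem isUnit_det_map {R : Type*} [CommRing R] (hM : IsUnimodular M) :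
    IsUnit (M.map ((↑) : ℕ → R)).det := by
  have hcast : M.map ((↑) : ℕ → R) = (M.map ((↑) : ℕ → ℤ)).map (Int.castRingHom R) := by
    rw [map_map]; ext; simp
  rw [hcast, ← RingHom.mapMatrix_apply, ← RingHom.map_det]
  rcases hM with h | h <;> simp [h]

theorem mulVec_map_injective {R : Type*} [CommRing R] (hM : IsUnimodular M) :
    Function.Injective (M.map ((↑) : ℕ → R) *ᵥ ·) :=
  mulVec_injective_of_isUnit ((isUnit_iff_isUnit_det _).2 hM.isUnit_det_map)

theorem mulVec_injective (hM : IsUnimodular M) :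
    Function.Injective (M *ᵥ · : (Fin n → ℕ) → Fin n → ℕ) := by
  have hcast (κ : Fin n → ℕ) : M.map ((↑) : ℕ → ℤ) *ᵥ ((↑) ∘ κ) = (↑) ∘ (M *ᵥ κ) :=
    funext fun i => ((Nat.castRingHom ℤ).map_mulVec M κ i).symm
  intro μ ν hμν
  refine Nat.cast_injective.comp_left (hM.mulVec_map_injective (R := ℤ) ?_)
  simp only [hcast]
  exact congrArg _ hμν

end IsUnimodular

noncomputable def monomialWeight (w : Fin n → ℝ) (μ : Fin n →₀ ℕ) : ℝ := ∑ i, w i * (μ i : ℝ)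

theorem monomialWeight_add (w : Fin n → ℝ) (μ ν : Fin n →₀ ℕ) :
    monomialWeight w (μ + ν) = monomialWeight w μ + monomialWeight w ν := by
  simp [monomialWeight, mul_add, Finset.sum_add_distrib]

theorem monomialWeight_nonneg {w : Fin n → ℝ} (hw : ∀ i, 0 ≤ w i) (μ : Fin n →₀ ℕ) :
    0 ≤ monomialWeight w μ :=
  Finset.sum_nonneg fun i _ => mul_nonneg (hw i) (Nat.cast_nonneg _)

theorem Set.indicator_one_nonneg {α : Type*} (S : Set α) (i : α) : (0 : ℝ) ≤ S.indicator 1 i :=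
  Set.indicator_nonneg (fun _ _ => zero_le_one) i

theorem monomialWeight_indicator_eq_zero_iff {S : Set (Fin n)} {μ : Fin n →₀ ℕ} :
    monomialWeight (S.indicator 1) μ = 0 ↔ ∀ i ∈ S, μ i = 0 := by
  rw [monomialWeight, Finset.sum_eq_zero_iff_of_nonneg fun i _ =>
    mul_nonneg (S.indicator_one_nonneg i) (Nat.cast_nonneg _)]
  refine ⟨fun h i hi => ?_, fun h i _ => ?_⟩
  · simpa [Set.indicator_of_mem hi] using h i (Finset.mem_univ i)
  · by_cases hi : i ∈ S <;> simp [hi, h]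

noncomputable def mulVecExp (N : Matrix (Fin n) (Fin n) ℕ) (μ : Fin n →₀ ℕ) : Fin n →₀ ℕ :=
  Finsupp.equivFunOnFinite.symm (N *ᵥ ⇑μ)

theorem mulVecExp_injective {N : Matrix (Fin n) (Fin n) ℕ} (hN : IsUnimodular N) :
    Function.Injective (mulVecExp N) :=
  Finsupp.equivFunOnFinite.symm.injective.comp (hN.mulVec_injective.comp DFunLike.coe_injective)

theorem monomialWeight_mulVecExp (w : Fin n → ℝ) (N : Matrix (Fin n) (Fin n) ℕ)
    (μ : Fin n →₀ ℕ) :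
    monomialWeight w (mulVecExp N μ) = monomialWeight (w ᵥ* N.map (↑)) μ := by
  have h := dotProduct_mulVec w (N.map ((↑) : ℕ → ℝ)) (fun i => (μ i : ℝ))
  simp only [dotProduct] at h
  simp only [monomialWeight, mulVecExp, Finsupp.coe_equivFunOnFinite_symm, ← h]
  exact Finset.sum_congr rfl fun i _ => congrArg (w i * ·) ((Nat.castRingHom ℝ).map_mulVec N μ i)

open Classical in
theorem coeff_initialPart (w : Fin n → ℝ) {R : Type*} [CommSemiring R] (f : MvPolynomial (Fin n) R)
    (μ : Fin n →₀ ℕ) :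
    (initialPart w f).coeff μ =
      if ∀ ν ∈ f.support, monomialWeight w μ ≤ monomialWeight w ν then f.coeff μ else 0 := by
  rw [initialPart, coeff_sum]
  simp only [apply_ite (coeff μ), coeff_monomial, coeff_zero]
  rw [Finset.sum_eq_single μ (fun ν _ hν => by simp [hν])
    (fun hμ => by simp [notMem_support_iff.1 hμ])]
  exact if_congr Iff.rfl (if_pos rfl) rfl

section MapExponents

variable {σ R : Type*} [CommSemiring R] {e : (σ →₀ ℕ) → σ →₀ ℕ}

noncomputable def mapExponents (e : (σ →₀ ℕ) → σ →₀ ℕ) (p : MvPolynomial σ R) :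
    MvPolynomial σ R :=
  ∑ μ ∈ p.support, monomial (e μ) (p.coeff μ)

theorem coeff_mapExponents_apply (he : Function.Injective e) (p : MvPolynomial σ R)
    (μ : σ →₀ ℕ) : (mapExponents e p).coeff (e μ) = p.coeff μ := by
  classical
  rw [mapExponents, coeff_sum, Finset.sum_eq_single μ (fun ν _ hν => by simp [he.ne hν])
    (fun hμ => by simp [notMem_support_iff.1 hμ]), coeff_monomial, if_pos rfl]

theorem coeff_mapExponents_of_notMem_range {α : σ →₀ ℕ} (hα : α ∉ Set.range e)
    (p : MvPolynomial σ R) : (mapExponents e p).coeff α = 0 := by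
  classical
  rw [mapExponents, coeff_sum]
  exact Finset.sum_eq_zero fun μ _ => by rw [coeff_monomial, if_neg fun h => hα ⟨μ, h⟩]

theorem support_mapExponents [DecidableEq σ] (he : Function.Injective e) (p : MvPolynomial σ R) :
    (mapExponents e p).support = p.support.image e := by
  ext α
  rw [Finset.mem_image]
  by_cases hα : α ∈ Set.range e
  · obtain ⟨μ, rfl⟩ := hα
    simp [coeff_mapExponents_apply he, he.eq_iff]
  · simp only [mem_support_iff, coeff_mapExponents_of_notMem_range hα, ne_eq, not_true_eq_false,
      false_iff, not_exists, not_and]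
    exact fun μ _ h => hα ⟨μ, h⟩

end MapExponents

theorem initialPart_mapExponents {R : Type*} [CommSemiring R] {e : (Fin n →₀ ℕ) → Fin n →₀ ℕ}
    (he : Function.Injective e) {w w' : Fin n → ℝ}
    (hw : ∀ μ ν, monomialWeight w (e μ) ≤ monomialWeight w (e ν) ↔
      monomialWeight w' μ ≤ monomialWeight w' ν) (p : MvPolynomial (Fin n) R) :
    initialPart w (mapExponents e p) = mapExponents e (initialPart w' p) := by
  classical
  ext α
  by_cases hα : α ∈ Set.range e
  · obtain ⟨μ, rfl⟩ := hα
    simp only [coeff_initialPart, coeff_mapExponents_apply he, support_mapExponents he,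
      Finset.forall_mem_image, hw]
  · rw [coeff_mapExponents_of_notMem_range hα, coeff_initialPart,
      coeff_mapExponents_of_notMem_range hα, ite_self]

noncomputable def monomialMap {R : Type*} [CommMonoid R] (N : Matrix (Fin n) (Fin n) ℕ)
    (x : Fin n → R) : Fin n → R :=
  fun i => ∏ j, x j ^ N j i

theorem monomialMap_ne_zero {R : Type*} [CommMonoidWithZero R] [NoZeroDivisors R] [Nontrivial R]
    (N : Matrix (Fin n) (Fin n) ℕ) {x : Fin n → R} (hx : ∀ i, x i ≠ 0) (i : Fin n) :
    monomialMap N x i ≠ 0 :=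
  Finset.prod_ne_zero_iff.2 fun j _ => pow_ne_zero _ (hx j)

section Substitution

variable {R : Type*} [CommSemiring R]

theorem monomialSubst_monomial (N : Matrix (Fin n) (Fin n) ℕ) (μ : Fin n →₀ ℕ) (a : R) :
    monomialSubst N (monomial μ a) = monomial (mulVecExp N μ) a := by
  rw [monomialSubst, aeval_monomial, monomial_eq, Finsupp.prod_fintype _ _ (by simp),
    Finsupp.prod_fintype _ _ (by simp)]
  congr 1
  simp only [← Finset.prod_pow, ← pow_mul]
  rw [Finset.prod_comm]
  simp [mulVecExp, mulVec, dotProduct, Finset.prod_pow_eq_pow_sum]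

theorem monomialSubst_eq_mapExponents (N : Matrix (Fin n) (Fin n) ℕ)
    (p : MvPolynomial (Fin n) R) : monomialSubst N p = mapExponents (mulVecExp N) p := by
  conv_lhs => rw [p.as_sum]
  rw [monomialSubst, map_sum]
  exact Finset.sum_congr rfl fun μ _ => monomialSubst_monomial N μ _

theorem initialPart_monomialSubst {N : Matrix (Fin n) (Fin n) ℕ} (hN : IsUnimodular N)
    (w : Fin n → ℝ) (p : MvPolynomial (Fin n) R) :
    initialPart w (monomialSubst N p) = monomialSubst N (initialPart (w ᵥ* N.map (↑)) p) := by
  simp only [monomialSubst_eq_mapExponents]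
  exact initialPart_mapExponents (mulVecExp_injective hN)
    (fun μ ν => by simp only [monomialWeight_mulVecExp]) p

theorem monomial_one_mul_eq_mapExponents {σ : Type*} (P : σ →₀ ℕ)
    (p : MvPolynomial σ R) : monomial P 1 * p = mapExponents (P + ·) p := by
  conv_lhs => rw [p.as_sum]
  rw [Finset.mul_sum]
  exact Finset.sum_congr rfl fun μ _ => by rw [monomial_mul, one_mul]

theorem initialPart_monomial_one_mul (w : Fin n → ℝ)
    (P : Fin n →₀ ℕ) (p : MvPolynomial (Fin n) R) :
    initialPart w (monomial P 1 * p) = monomial P 1 * initialPart w p := by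
  simp only [monomial_one_mul_eq_mapExponents]
  exact initialPart_mapExponents (add_right_injective P)
    (fun μ ν => by simp only [monomialWeight_add, add_le_add_iff_left]) p

theorem eval_monomialSubst (N : Matrix (Fin n) (Fin n) ℕ) (x : Fin n → R)
    (p : MvPolynomial (Fin n) R) : eval x (monomialSubst N p) = eval (monomialMap N x) p := by
  refine (comp_aeval_apply _ (aeval x) p).trans (congrArg (eval · p) (funext fun i => ?_))
  simp [monomialMap]

theorem X_mul_pderiv_monomialSubst (N : Matrix (Fin n) (Fin n) ℕ) (p : MvPolynomial (Fin n) R)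
    (j : Fin n) :
    X j * pderiv j (monomialSubst N p) = ∑ k, N j k • monomialSubst N (X k * pderiv k p) := by
  induction p using MvPolynomial.induction_on' with
  | monomial μ a =>
    have hsmul (m : ℕ) (q : MvPolynomial (Fin n) R) :
        monomialSubst N (m • q) = m • monomialSubst N q :=
      map_nsmul (aeval _) m q
    simp only [X_mul_pderiv_monomial, hsmul, monomialSubst_monomial, smul_smul,
      ← Finset.sum_smul]
    rfl
  | add p q hp hq =>
    simp only [monomialSubst, map_add, mul_add] at hp hq ⊢
    rw [hp, hq, ← Finset.sum_add_distrib]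
    simp only [smul_add]

end Substitution

theorem exists_eval_pderiv_monomialSubst_ne_zero {K : Type*} [CommRing K] [IsDomain K]
    {N : Matrix (Fin n) (Fin n) ℕ} (hN : IsUnimodular N) (p : MvPolynomial (Fin n) K)
    {x : Fin n → K} (hx : ∀ i, x i ≠ 0) {k : Fin n}
    (hk : eval (monomialMap N x) (pderiv k p) ≠ 0) :
    ∃ j, eval x (pderiv j (monomialSubst N p)) ≠ 0 := by
  set z := monomialMap N x
  set v : Fin n → K := fun k => z k * eval z (pderiv k p)
  have hv : v ≠ 0 := fun h0 => mul_ne_zero (monomialMap_ne_zero N hx k) hk (congrFun h0 k)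
  obtain ⟨j, hj⟩ := Function.ne_iff.1 (hN.mulVec_map_injective.ne hv)
  have euler := congrArg (eval x) (X_mul_pderiv_monomialSubst N p j)
  simp only [map_mul, eval_X, map_sum, eval_monomialSubst, nsmul_eq_mul, map_natCast] at euler
  refine ⟨j, fun h0 => hj ?_⟩
  rw [mulVec_zero, Pi.zero_apply, ← mul_zero (x j), ← h0, euler]
  rfl

section Support

variable {σ R : Type*} [CommSemiring R]

theorem eval_eq_of_mem_supported {T : Set σ} {p : MvPolynomial σ R} (hp : p ∈ supported R T)
    {v v' : σ → R} (hv : ∀ i ∈ T, v i = v' i) : eval v p = eval v' p :=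
  eval₂Hom_congr' rfl (fun i hi _ => hv i (mem_supported.1 hp hi)) rfl

theorem vars_pderiv_subset (j : σ) (p : MvPolynomial σ R) : (pderiv j p).vars ⊆ p.vars := by
  intro i hi
  obtain ⟨d, hd, hid⟩ := (mem_vars_iff_mem_support _).1 hi
  rw [mem_support_iff, coeff_pderiv] at hd
  refine (mem_vars_iff_mem_support _).2 ⟨d + Finsupp.single j 1,
    mem_support_iff.2 (left_ne_zero_of_mul hd), ?_⟩
  rw [Finsupp.mem_support_iff] at hid ⊢
  simp [hid]

theorem pderiv_mem_supported {T : Set σ} {p : MvPolynomial σ R} (hp : p ∈ supported R T)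
    (j : σ) : pderiv j p ∈ supported R T :=
  mem_supported.2 ((Finset.coe_subset.2 (vars_pderiv_subset j p)).trans (mem_supported.1 hp))

theorem pderiv_eq_zero_of_mem_supported {T : Set σ} {p : MvPolynomial σ R}
    (hp : p ∈ supported R T) {j : σ} (hj : j ∉ T) : pderiv j p = 0 :=
  pderiv_eq_zero_of_notMem_vars fun h => hj (mem_supported.1 hp h)

theorem eval_eq_zero_of_mem_span_X_image {S : Set σ} {v : σ → R} (hv : ∀ i ∈ S, v i = 0)
    {p : MvPolynomial σ R} (hp : p ∈ Ideal.span (X '' S)) : eval v p = 0 := by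
  refine (Ideal.span_le (I := RingHom.ker (eval v))).2 ?_ hp
  rintro _ ⟨i, hi, rfl⟩
  simp [hv i hi]

theorem pderiv_mem_span_X_image {S : Set σ} {j : σ} (hj : j ∉ S) {p : MvPolynomial σ R}
    (hp : p ∈ Ideal.span (X '' S)) : pderiv j p ∈ Ideal.span (X '' S) := by
  induction hp using Submodule.span_induction with
  | mem _ hq =>
    obtain ⟨i, hi, rfl⟩ := hq
    rw [pderiv_X_of_ne (ne_of_mem_of_not_mem hi hj)]
    exact zero_mem _
  | zero => simp only [map_zero, zero_mem]
  | add _ _ _ _ hq hr => simpa only [map_add] using add_mem hq hr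
  | smul a q hq hdq =>
    rw [smul_eq_mul, pderiv_mul]
    exact add_mem (Ideal.mul_mem_left _ _ hq) (Ideal.mul_mem_left _ _ hdq)

end Support

section IndicatorWeight

variable {R : Type*} {S : Set (Fin n)}

theorem isMinWeight_indicator_iff [CommSemiring R] {p : MvPolynomial (Fin n) R}
    (hp : p.coeff 0 ≠ 0) {μ : Fin n →₀ ℕ} :
    (∀ ν ∈ p.support, monomialWeight (S.indicator 1) μ ≤ monomialWeight (S.indicator 1) ν) ↔
      ∀ i ∈ S, μ i = 0 := by
  rw [← monomialWeight_indicator_eq_zero_iff]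
  refine ⟨fun hmin => le_antisymm ?_ (monomialWeight_nonneg S.indicator_one_nonneg μ),
    fun h0 ν _ => ?_⟩
  · simpa [monomialWeight] using hmin 0 (mem_support_iff.2 hp)
  · exact h0 ▸ monomialWeight_nonneg S.indicator_one_nonneg ν

open Classical in
theorem coeff_initialPart_indicator [CommSemiring R] {p : MvPolynomial (Fin n) R}
    (hp : p.coeff 0 ≠ 0) (μ : Fin n →₀ ℕ) :
    (initialPart (S.indicator 1) p).coeff μ = if ∀ i ∈ S, μ i = 0 then p.coeff μ else 0 := by
  rw [coeff_initialPart]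
  exact if_congr (isMinWeight_indicator_iff hp) rfl rfl

theorem initialPart_indicator_mem_supported [CommSemiring R] {p : MvPolynomial (Fin n) R}
    (hp : p.coeff 0 ≠ 0) : initialPart (S.indicator 1) p ∈ supported R Sᶜ := by
  classical
  refine mem_supported.2 fun i hi hiS => ?_
  obtain ⟨d, hd, hid⟩ := (mem_vars_iff_mem_support _).1 hi
  rw [mem_support_iff, coeff_initialPart_indicator hp] at hd
  split_ifs at hd with hdS
  · exact Finsupp.mem_support_iff.1 hid (hdS i hiS)
  · exact hd rfl

theorem sub_initialPart_indicator_mem_span [CommRing R] {p : MvPolynomial (Fin n) R}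
    (hp : p.coeff 0 ≠ 0) : p - initialPart (S.indicator 1) p ∈ Ideal.span (X '' S) := by
  classical
  refine mem_ideal_span_X_image.2 fun μ hμ => ?_
  rw [mem_support_iff, coeff_sub, coeff_initialPart_indicator hp] at hμ
  split_ifs at hμ with hμS
  · exact absurd (sub_self _) hμ
  · push Not at hμS
    exact hμS

theorem eval_initialPart_indicator [CommRing R] {p : MvPolynomial (Fin n) R}
    (hp : p.coeff 0 ≠ 0) {y y' : Fin n → R} (hy : ∀ i ∈ S, y i = 0)
    (hyy' : ∀ i ∉ S, y' i = y i) :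
    eval y' (initialPart (S.indicator 1) p) = eval y p := by
  have hrest := eval_eq_zero_of_mem_span_X_image hy (sub_initialPart_indicator_mem_span hp)
  rw [map_sub, sub_eq_zero] at hrest
  rw [hrest, eval_eq_of_mem_supported (initialPart_indicator_mem_supported hp) hyy']

theorem eval_pderiv_initialPart_indicator [CommRing R] {p : MvPolynomial (Fin n) R}
    (hp : p.coeff 0 ≠ 0) {y y' : Fin n → R} (hy : ∀ i ∈ S, y i = 0)
    (hyy' : ∀ i ∉ S, y' i = y i) {j : Fin n} (hj : j ∉ S) :
    eval y' (pderiv j (initialPart (S.indicator 1) p)) = eval y (pderiv j p) := by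
  have hrest := eval_eq_zero_of_mem_span_X_image hy
    (pderiv_mem_span_X_image hj (sub_initialPart_indicator_mem_span hp))
  rw [map_sub, map_sub, sub_eq_zero] at hrest
  rw [hrest, eval_eq_of_mem_supported
    (pderiv_mem_supported (initialPart_indicator_mem_supported hp) j) hyy']

end IndicatorWeight

end

theorem strict_transform_nonsingular_general {n : ℕ} {K : Type*} [Field K]
    (f : MvPolynomial (Fin n) K)
    (hnd : ∀ w : Fin n → ℝ, (∀ i, 0 ≤ w i) → ∀ z : Fin n → K, (∀ i, z i ≠ 0) →
      eval z (initialPart w f) = 0 → ∃ j : Fin n, eval z (pderiv j (initialPart w f)) ≠ 0)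
    (M : Matrix (Fin n) (Fin n) ℕ) (hM : IsUnimodular M)
    (P : Fin n →₀ ℕ) (h : MvPolynomial (Fin n) K)
    (hfac : monomialSubst Mᵀ f = monomial P 1 * h)
    (hh0 : eval (0 : Fin n → K) h ≠ 0)
    (s : ℕ) (y : Fin n → K)
    (hy0 : ∀ i : Fin n, (i : ℕ) < s → y i = 0)
    (hy1 : ∀ i : Fin n, s ≤ (i : ℕ) → y i ≠ 0)
    (hyh : eval y h = 0) :
    ∃ j : Fin n, s ≤ (j : ℕ) ∧ eval y (pderiv j h) ≠ 0 := by
  classical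
  rw [eval_zero, constantCoeff_eq] at hh0
  set S : Set (Fin n) := {i | (i : ℕ) < s}
  set q := initialPart (S.indicator 1) h
  set ω := S.indicator 1 ᵥ* Mᵀ.map ((↑) : ℕ → ℝ)
  have hω (i : Fin n) : 0 ≤ ω i := show 0 ≤ ∑ k, S.indicator 1 k * (M i k : ℝ) from
    Finset.sum_nonneg fun k _ => mul_nonneg (S.indicator_one_nonneg k) (Nat.cast_nonneg _)
  have hpullback : monomialSubst Mᵀ (initialPart ω f) = monomial P 1 * q := by
    rw [← initialPart_monomialSubst hM.transpose, hfac, initialPart_monomial_one_mul]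
  set x : Fin n → K := fun i => if (i : ℕ) < s then 1 else y i
  have hx : ∀ i, x i ≠ 0 := fun i => by
    by_cases hi : (i : ℕ) < s
    · simp [x, hi]
    · simpa [x, hi] using hy1 i (not_lt.1 hi)
  have hxy : ∀ i ∉ S, x i = y i := fun i hi => if_neg hi
  have hqx : eval x q = 0 := (eval_initialPart_indicator hh0 hy0 hxy).trans hyh
  have hfz : eval (monomialMap Mᵀ x) (initialPart ω f) = 0 := by
    rw [← eval_monomialSubst, hpullback, map_mul, hqx, mul_zero]
  obtain ⟨k, hk⟩ := hnd ω hω _ (monomialMap_ne_zero Mᵀ hx) hfz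
  obtain ⟨j, hj⟩ := exists_eval_pderiv_monomialSubst_ne_zero hM.transpose _ hx hk
  rw [hpullback, pderiv_mul, map_add, map_mul, map_mul, hqx, mul_zero, zero_add] at hj
  have hjS : j ∉ S := fun hjS => hj <| by
    rw [pderiv_eq_zero_of_mem_supported (initialPart_indicator_mem_supported hh0)
      (not_not.2 hjS), map_zero, mul_zero]
  exact ⟨j, not_lt.1 hjS,
    eval_pderiv_initialPart_indicator hh0 hy0 hxy hjS ▸ right_ne_zero_of_mul hj⟩

/-- Let `f` be a nonzero Newton non-degenerate polynomial (for every
nonnegative `ω`, the hypersurface `V(In_ω f)` has no singular point in the torus).  Let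
`M` be a nonnegative unimodular matrix whose column cone is good for `f`, and write
`f ∘ φ_{Mᵀ} = x^P · h` with `h(0) ≠ 0`.  Then at every point `y` of the strict transform
lying on the orbit `{x_1 = ⋯ = x_s = 0, x_{s+1} ⋯ x_n ≠ 0}` there is a coordinate
`j > s` with `(∂h/∂x_j)(y) ≠ 0`: the strict transform is nonsingular at `y` and
transversal to the coordinate subspace. -/
theorem strict_transform_nonsingular {n : ℕ} {K : Type*} [Field K] [IsAlgClosed K]
    (f : MvPolynomial (Fin n) K) (hf : f ≠ 0)
    (hnd : ∀ w : Fin n → ℝ, (∀ i, 0 ≤ w i) → ∀ z : Fin n → K, (∀ i, z i ≠ 0) →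
      eval z (initialPart w f) = 0 → ∃ j : Fin n, eval z (pderiv j (initialPart w f)) ≠ 0)
    (M : Matrix (Fin n) (Fin n) ℕ) (hM : IsUnimodular M)
    (hgood : ∀ lam lam' : Fin n → ℝ, (∀ i, 0 < lam i) → (∀ i, 0 < lam' i) →
      initialPart ((M.map ((↑) : ℕ → ℝ)).mulVec lam) f =
        initialPart ((M.map ((↑) : ℕ → ℝ)).mulVec lam') f)
    (P : Fin n →₀ ℕ) (h : MvPolynomial (Fin n) K)
    (hfac : monomialSubst Mᵀ f = monomial P 1 * h)
    (hh0 : eval (0 : Fin n → K) h ≠ 0)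
    (s : ℕ) (hs1 : 1 ≤ s) (hsn : s ≤ n) (y : Fin n → K)
    (hy0 : ∀ i : Fin n, (i : ℕ) < s → y i = 0)
    (hy1 : ∀ i : Fin n, s ≤ (i : ℕ) → y i ≠ 0)
    (hyh : eval y h = 0) :
    ∃ j : Fin n, s ≤ (j : ℕ) ∧ eval y (pderiv j h) ≠ 0 :=
  strict_transform_nonsingular_general f hnd M hM P h hfac hh0 s y hy0 hy1 hyh
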